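/- arXiv:2009.13813 — 2 statements merged into one kernel-verified Lean document; each statement's English description precedes it below -/
import Mathlib

section
/- Let A be a ring, p, g₀, π₀ ∈ A with pπ₀ = 0, and suppose pg₀ + π₀ − 1 =: r is such that 1 + r has a two-sided inverse a₀ in A. Set π := π₀a₀ and g := (1 − π)g₀a₀. Then pg + π = 1 and pπ = 0. -/
/-- Let `A` be a ring, `p, g₀, π₀ ∈ A` with `pπ₀ = 0`, and let `r := pg₀ + π₀ − 1`.
If `1 + r` has a two-sided inverse `a₀`, then `π := π₀a₀` and `g := (1 − π)g₀a₀`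
satisfy `pg + π = 1` and `pπ = 0`. -/
theorem exact_parametrix_from_approximate {A : Type*} [Ring A]
    (p g₀ π₀ r a₀ π g : A)
    (hpπ₀ : p * π₀ = 0)
    (hr : r = p * g₀ + π₀ - 1)
    (ha₁ : a₀ * (1 + r) = 1) (ha₂ : (1 + r) * a₀ = 1)
    (hπ : π = π₀ * a₀) (hg : g = (1 - π) * g₀ * a₀) :
    p * g + π = 1 ∧ p * π = 0 := by
  have hpπ : p * π = 0 := by
    rw [hπ, ← mul_assoc, hpπ₀, zero_mul]
  refine ⟨?_, hpπ⟩
  have : p * g = p * g₀ * a₀ := by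
    rw [hg, ← mul_assoc, ← mul_assoc, mul_sub, mul_one, hpπ, sub_zero]
  rw [this, hπ, ← add_mul]
  have : p * g₀ + π₀ = 1 + r := by rw [hr]; abel
  rw [this, ha₂]
end

section
/- Let H be a Hilbert space, P a densely defined closed operator on H with closed range and orthogonal projection Π onto Ker P. Suppose Π_∞ and R' are bounded operators with Ran Π_∞ ⊆ Ker P and P∘G_∞ + Π_∞ = 1 + R' on H for some bounded G_∞ with Ran G_∞ ⊆ Dom P. Then Π − Π_∞ = (R')*Π R' − Π_∞* R'. In particular, if R' and Π_∞* R' belong to a *-closed two-sided ideal I of bounded operators, then Π − Π_∞ ∈ I. -/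
open InnerProductSpace ContinuousLinearMap

/-- Let `P` be a densely defined closed operator on a Hilbert space `H` with closed
range, `Π` the orthogonal projection onto `Ker P`, and suppose `Π_∞, R'` are bounded
with `Ran Π_∞ ⊆ Ker P` and `P G_∞ + Π_∞ = 1 + R'`. Then
`Π − Π_∞ = (R')* Pr R' − Π_∞* R'`; in particular if `R'` and `Π_∞* R'` lie in a
`*`-closed two-sided ideal `I`, then `Π − Π_∞ ∈ I`. -/
theorem projection_difference_smoothing
    {H : Type*} [NormedAddCommGroup H] [InnerProductSpace ℂ H] [CompleteSpace H]
    (P : H →ₗ.[ℂ] H) (hdense : Dense (P.domain : Set H)) (hPclosed : P.IsClosed)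
    (hclosedrange : IsClosed (Set.range fun u : P.domain => P u))
    (K : Set H) (hK : K = {x : H | ∃ hx : x ∈ P.domain, P ⟨x, hx⟩ = 0})
    (Pr PiInf R' Ginf : H →L[ℂ] H)
    (hPrrange : ∀ x : H, Pr x ∈ K) (hPrfix : ∀ x ∈ K, Pr x = x)
    (hPrsa : IsSelfAdjoint Pr)
    (hPrP : ∀ u : P.domain, Pr (P u) = 0)
    (hPiInfrange : ∀ x : H, PiInf x ∈ K)
    (hG : ∀ x : H, Ginf x ∈ P.domain)
    (heq : ∀ x : H, P ⟨Ginf x, hG x⟩ + PiInf x = x + R' x) :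
    Pr - PiInf = (adjoint R').comp (Pr.comp R') - (adjoint PiInf).comp R' ∧
    ∀ I : TwoSidedIdeal (H →L[ℂ] H), R' ∈ I → (adjoint PiInf) * R' ∈ I →
      Pr - PiInf ∈ I := by
  -- Step 1: Pr ∘ R' = PiInf - Pr
  have key : Pr.comp R' = PiInf - Pr := by
    ext x
    have hx : R' x = P ⟨Ginf x, hG x⟩ + PiInf x - x := by
      rw [eq_sub_iff_add_eq, add_comm]; exact (heq x).symm
    simp only [ContinuousLinearMap.comp_apply, ContinuousLinearMap.sub_apply]
    rw [hx, map_sub, map_add, hPrP ⟨Ginf x, hG x⟩,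
      hPrfix (PiInf x) (hPiInfrange x), zero_add]
  -- Step 2: adjoint: R'* ∘ Pr = PiInf* - Pr
  have key2 : (adjoint R').comp Pr = adjoint PiInf - Pr := by
    have := congrArg adjoint key
    rwa [adjoint_comp, hPrsa.adjoint_eq, map_sub, hPrsa.adjoint_eq] at this
  have main : Pr - PiInf = (adjoint R').comp (Pr.comp R') - (adjoint PiInf).comp R' := by
    have : (adjoint R').comp (Pr.comp R') = (adjoint PiInf - Pr).comp R' := by
      rw [← key2, ContinuousLinearMap.comp_assoc]
    rw [this, ContinuousLinearMap.sub_comp, key]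
    ext x; simp [ContinuousLinearMap.sub_apply]
  refine ⟨main, fun I hR hPiR => ?_⟩
  rw [main]
  exact I.sub_mem (I.mul_mem_left _ _ (I.mul_mem_left _ _ hR)) hPiR
end
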